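/- By König's edge coloring theorem applied to a d-regular bipartite-double-cover argument (or Vizing-type decomposition), the edge set of any d-regular graph can be partitioned into at most 2d matchings; consequently, assigning to each vertex v the vector whose k-th coordinate encodes the labels of edges incident to v in a proper edge coloring with colors 1..2d, scaled appropriately, one obtains a 2d-dimensional embedding x with y_e · ⟨x_a, x_b⟩ > 1 for every labeled edge e = (a,b). -/

import Mathlib

/-!
Coloring: the line graph of a graph of maximum degree `d` has maximum degree at most `2d - 2`,
so coloring it greedily uses at most `2d - 1` colors.

Embedding: place the vertices one at a time. Each vertex has at most `d` already placed
neighbors, and as long as their vectors are linearly independent the new vector can be given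
any prescribed inner products with them, so the margin constraints cut out a nonempty open set.
Inside it, choose the new vector off the spans of the placed neighbors of each of its own
neighbors `w`; these spans have dimension `< deg w ≤ 2d`, so they are nowhere dense, and the
independence is preserved for the next step.
-/

open scoped RealInnerProductSpace
open Function Module Submodule

theorem LinearIndependent.exists_inner_eq {E ι : Type*} [NormedAddCommGroup E]
    [InnerProductSpace ℝ E] [FiniteDimensional ℝ E] {v : ι → E} (hv : LinearIndependent ℝ v)
    (c : ι → ℝ) : ∃ z : E, ∀ i, ⟪z, v i⟫ = c i := by
  obtain ⟨f, hf⟩ := LinearMap.exists_extend ((Basis.span hv).constr ℝ c)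
  refine ⟨(InnerProductSpace.toDual ℝ E).symm (LinearMap.toContinuousLinearMap f), fun i => ?_⟩
  rw [InnerProductSpace.toDual_symm_apply]
  have h := congr($hf (Basis.span hv i))
  rwa [Basis.constr_basis, LinearMap.comp_apply, Submodule.subtype_apply, Basis.span_apply] at h

theorem IsOpen.exists_mem_forall_notMem_submodule {𝕜 E ι : Type*} [NontriviallyNormedField 𝕜]
    [CompleteSpace 𝕜] [NormedAddCommGroup E] [NormedSpace 𝕜 E] [FiniteDimensional 𝕜 E]
    [Finite ι] {p : ι → Submodule 𝕜 E} (hp : ∀ i, p i ≠ ⊤) {U : Set E} (hU : IsOpen U)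
    (hne : U.Nonempty) : ∃ z ∈ U, ∀ i, z ∉ p i := by
  have : CompleteSpace E := FiniteDimensional.complete 𝕜 E
  have hdense : Dense (⋂ i, (p i : Set E)ᶜ) := by
    refine dense_iInter_of_isOpen (fun i => (p i).closed_of_finiteDimensional.isOpen_compl)
      fun i => interior_eq_empty_iff_dense_compl.1 ?_
    by_contra h
    exact hp i ((p i).eq_top_of_nonempty_interior' (Set.nonempty_iff_ne_empty.2 h))
  obtain ⟨z, hz, hzU⟩ := hdense.exists_mem_open hU hne
  exact ⟨z, hzU, fun i => Set.mem_iInter.1 hz i⟩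

namespace SimpleGraph

variable {V E : Type*} [NormedAddCommGroup E] [InnerProductSpace ℝ E]
  {G : SimpleGraph V} {y : V → V → ℝ} {x : V → E} {S : Finset V} {v : V}

theorem colorable_of_ncard_neighborSet_lt [Finite V] (G : SimpleGraph V) {k : ℕ}
    (h : ∀ v, (G.neighborSet v).ncard < k) : G.Colorable k := by
  classical
  have : Fintype V := Fintype.ofFinite V
  suffices ∀ S : Finset V, ∃ C : V → Fin k, ∀ a ∈ S, ∀ b ∈ S, G.Adj a b → C a ≠ C b by
    obtain ⟨C, hC⟩ := this Finset.univ
    exact ⟨Coloring.mk C fun hab => hC _ (Finset.mem_univ _) _ (Finset.mem_univ _) hab⟩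
  intro S
  induction S using Finset.induction_on with
  | empty => exact ⟨fun v => ⟨0, (Nat.zero_le _).trans_lt (h v)⟩, by simp⟩
  | insert v S hv ih =>
    obtain ⟨C, hC⟩ := ih
    obtain ⟨c, hc⟩ : ∃ c, c ∉ C '' G.neighborSet v := by
      by_contra! hall
      have huniv : C '' G.neighborSet v = Set.univ := Set.eq_univ_of_forall hall
      have := (Set.ncard_image_le (f := C) (Set.toFinite (G.neighborSet v))).trans_lt (h v)
      rw [huniv, Set.ncard_univ, Nat.card_fin] at this
      exact this.false
    have hfresh : ∀ u, G.Adj v u → c ≠ C u := fun u hu hcu => hc ⟨u, hu, hcu.symm⟩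
    have hold : ∀ u ∈ S, update C v c u = C u := fun u hu =>
      update_of_ne (ne_of_mem_of_not_mem hu hv) _ _
    refine ⟨update C v c, fun a ha b hb hab => ?_⟩
    rcases Finset.mem_insert.1 ha with rfl | haS <;> rcases Finset.mem_insert.1 hb with rfl | hbS
    · exact (hab.ne rfl).elim
    · rw [update_self, hold b hbS]; exact hfresh b hab
    · rw [update_self, hold a haS]; exact (hfresh a hab.symm).symm
    · rw [hold a haS, hold b hbS]; exact hC a haS b hbS hab

theorem ncard_lineGraph_neighborSet_lt [Fintype V] [DecidableRel G.Adj] {d : ℕ}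
    (hdeg : ∀ v, G.degree v ≤ d) (e : G.edgeSet) :
    (G.lineGraph.neighborSet e).ncard < 2 * d := by
  classical
  obtain ⟨⟨a, b⟩, he⟩ := e
  set s : Finset (Sym2 V) :=
    (G.incidenceFinset a).erase s(a, b) ∪ (G.incidenceFinset b).erase s(a, b)
  have hsub : Subtype.val '' G.lineGraph.neighborSet ⟨s(a, b), he⟩ ⊆ s := by
    rintro _ ⟨e', he', rfl⟩
    rw [mem_neighborSet, lineGraph_adj_iff_exists] at he'
    obtain ⟨hne, w, hw, hw'⟩ := he'
    have hne' : (e' : Sym2 V) ≠ s(a, b) := fun h => hne (Subtype.ext h.symm)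
    have hinc : (e' : Sym2 V) ∈ G.incidenceFinset w :=
      (G.mem_incidenceFinset w _).2 ⟨e'.2, hw'⟩
    rw [Finset.mem_coe]
    rcases Sym2.mem_iff.1 hw with rfl | rfl
    · exact Finset.mem_union_left _ (Finset.mem_erase.2 ⟨hne', hinc⟩)
    · exact Finset.mem_union_right _ (Finset.mem_erase.2 ⟨hne', hinc⟩)
  have hmem : ∀ v ∈ s(a, b), s(a, b) ∈ G.incidenceFinset v := fun v hv => by
    simpa [mem_incidenceFinset] using ⟨he, hv⟩
  calc (G.lineGraph.neighborSet ⟨s(a, b), he⟩).ncard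
      = (Subtype.val '' G.lineGraph.neighborSet ⟨s(a, b), he⟩).ncard :=
        (Set.ncard_image_of_injective _ Subtype.val_injective).symm
    _ ≤ s.card := by rw [← Set.ncard_coe_finset]; exact Set.ncard_le_ncard hsub
    _ ≤ (G.degree a - 1) + (G.degree b - 1) := by
        refine (Finset.card_union_le _ _).trans (add_le_add ?_ ?_) <;>
          rw [Finset.card_erase_of_mem (hmem _ (by simp)), card_incidenceFinset_eq_degree]
    _ < 2 * d := by
        have ha := hdeg a; have hb := hdeg b
        have : 0 < G.degree a := (G.degree_pos_iff_exists_adj a).2 ⟨b, he⟩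
        omega

theorem exists_edgeColoring_of_degree_le [Fintype V] [DecidableRel G.Adj] {d : ℕ} (hd : 0 < d)
    (hdeg : ∀ v, G.degree v ≤ d) :
    ∃ C : V → V → Fin (2 * d), (∀ a b, C a b = C b a) ∧
      ∀ a b c, G.Adj a b → G.Adj a c → b ≠ c → C a b ≠ C a c := by
  obtain ⟨col⟩ :=
    G.lineGraph.colorable_of_ncard_neighborSet_lt (ncard_lineGraph_neighborSet_lt hdeg)
  refine ⟨fun a b => if h : G.Adj a b then col ⟨s(a, b), h⟩ else ⟨0, by omega⟩,
    fun a b => ?_, fun a b c hab hac hbc => ?_⟩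
  · by_cases h : G.Adj a b
    · simp only [dif_pos h, dif_pos h.symm, Sym2.eq_swap]
    · simp only [dif_neg h, dif_neg (mt G.adj_symm h)]
  · simp only [dif_pos hab, dif_pos hac]
    refine col.valid (lineGraph_adj_iff_exists.2 ⟨fun h => hbc ?_, a, by simp, by simp⟩)
    exact Sym2.congr_right.1 (congrArg Subtype.val h)

theorem span_image_neighborSet_inter_ne_top [Fintype V] [DecidableRel G.Adj]
    [FiniteDimensional ℝ E] {w : V}
    (hdeg : G.degree w ≤ finrank ℝ E) (hwv : G.Adj w v) (hv : v ∉ S) :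
    span ℝ (x '' (G.neighborSet w ∩ S)) ≠ ⊤ := by
  classical
  intro htop
  have hsub : G.neighborFinset w ∩ S ⊆ (G.neighborFinset w).erase v := fun u hu => by
    rw [Finset.mem_inter] at hu
    exact Finset.mem_erase.2 ⟨ne_of_mem_of_not_mem hu.2 hv, hu.1⟩
  have himage : x '' (G.neighborSet w ∩ S) = ((G.neighborFinset w ∩ S).image x : Finset E) := by
    simp
  have := calc finrank ℝ E
      = finrank ℝ (span ℝ (x '' (G.neighborSet w ∩ S))) := by rw [htop, finrank_top]
    _ ≤ ((G.neighborFinset w ∩ S).image x).card := by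
        rw [himage]; exact finrank_span_finset_le_card _
    _ ≤ ((G.neighborFinset w).erase v).card :=
        Finset.card_image_le.trans (Finset.card_le_card hsub)
    _ = G.degree w - 1 := by
        rw [Finset.card_erase_of_mem ((G.mem_neighborFinset w v).2 hwv),
          card_neighborFinset_eq_degree]
  have : 0 < G.degree w := (G.degree_pos_iff_exists_adj w).2 ⟨v, hwv⟩
  omega

structure IsMarginEmbeddingOn (G : SimpleGraph V) (y : V → V → ℝ) (x : V → E)
    (S : Finset V) : Prop where
  margin : ∀ a ∈ S, ∀ b ∈ S, G.Adj a b → 1 < y a b * ⟪x a, x b⟫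
  linearIndepOn_neighborSet : ∀ w, LinearIndepOn ℝ x (G.neighborSet w ∩ S)

theorem IsMarginEmbeddingOn.update_insert [DecidableEq V] (hsym : ∀ a b, y a b = y b a)
    (hx : G.IsMarginEmbeddingOn y x S) (hv : v ∉ S) {z : E}
    (hmargin : ∀ u ∈ G.neighborSet v ∩ S, 1 < y v u * ⟪z, x u⟫)
    (hspan : ∀ w ∈ G.neighborSet v, z ∉ span ℝ (x '' (G.neighborSet w ∩ S))) :
    G.IsMarginEmbeddingOn y (update x v z) (insert v S) := by
  have hold : Set.EqOn (update x v z) x S := fun u hu =>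
    update_of_ne (ne_of_mem_of_not_mem (Finset.mem_coe.1 hu) hv) _ _
  have holdN : ∀ w, Set.EqOn (update x v z) x (G.neighborSet w ∩ S) := fun w =>
    hold.mono Set.inter_subset_right
  constructor
  · intro a ha b hb hab
    rcases Finset.mem_insert.1 ha with rfl | haS <;> rcases Finset.mem_insert.1 hb with rfl | hbS
    · exact (hab.ne rfl).elim
    · rw [update_self, hold hbS]; exact hmargin b ⟨hab, hbS⟩
    · rw [update_self, hold haS, hsym, real_inner_comm]; exact hmargin a ⟨hab.symm, haS⟩
    · rw [hold haS, hold hbS]; exact hx.margin a haS b hbS hab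
  · intro w
    by_cases hwv : G.Adj w v
    · rw [Finset.coe_insert, Set.inter_insert_of_mem (G.mem_neighborSet w v |>.2 hwv)]
      refine ((hx.linearIndepOn_neighborSet w).congr (holdN w).symm).insert ?_
      rw [update_self, (holdN w).image_eq]
      exact hspan w hwv.symm
    · rw [Finset.coe_insert, Set.inter_insert_of_notMem (hwv ∘ (G.mem_neighborSet w v).1)]
      exact (hx.linearIndepOn_neighborSet w).congr (holdN w).symm

theorem IsMarginEmbeddingOn.exists_extension [Fintype V] [DecidableRel G.Adj]
    [FiniteDimensional ℝ E]
    (hdeg : ∀ w, G.degree w ≤ finrank ℝ E) (hy : ∀ a b, G.Adj a b → y a b ≠ 0)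
    (hx : G.IsMarginEmbeddingOn y x S) (hv : v ∉ S) :
    ∃ z : E, (∀ u ∈ G.neighborSet v ∩ S, 1 < y v u * ⟪z, x u⟫) ∧
      ∀ w ∈ G.neighborSet v, z ∉ span ℝ (x '' (G.neighborSet w ∩ S)) := by
  obtain ⟨z₀, hz₀⟩ := (hx.linearIndepOn_neighborSet v).exists_inner_eq fun u => 2 / y v u
  set U := ⋂ u ∈ G.neighborSet v ∩ S, {z : E | 1 < y v u * ⟪z, x u⟫}
  have hU : IsOpen U :=
    (Set.toFinite _).isOpen_biInter fun u _ => isOpen_lt continuous_const (by fun_prop)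
  have hz₀U : z₀ ∈ U := Set.mem_iInter₂.2 fun u hu => by
    rw [Set.mem_ofPred_eq, hz₀ ⟨u, hu⟩, mul_div_cancel₀ _ (hy v u hu.1)]
    norm_num
  obtain ⟨z, hzU, hz⟩ := hU.exists_mem_forall_notMem_submodule
    (p := fun w : G.neighborSet v => span ℝ (x '' (G.neighborSet w ∩ S)))
    (fun w => span_image_neighborSet_inter_ne_top (hdeg w) w.2.symm hv) ⟨z₀, hz₀U⟩
  exact ⟨z, fun u hu => Set.mem_iInter₂.1 hzU u hu, fun w hw => hz ⟨w, hw⟩⟩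

theorem exists_margin_embedding [Fintype V] [DecidableRel G.Adj] [FiniteDimensional ℝ E]
    (hdeg : ∀ w, G.degree w ≤ finrank ℝ E)
    (hsym : ∀ a b, y a b = y b a) (hy : ∀ a b, G.Adj a b → y a b ≠ 0) :
    ∃ x : V → E, ∀ a b, G.Adj a b → 1 < y a b * ⟪x a, x b⟫ := by
  classical
  suffices ∀ S : Finset V, ∃ x : V → E, G.IsMarginEmbeddingOn y x S by
    obtain ⟨x, hx⟩ := this Finset.univ
    exact ⟨x, fun a b hab => hx.margin a (Finset.mem_univ a) b (Finset.mem_univ b) hab⟩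
  intro S
  induction S using Finset.induction_on with
  | empty => exact ⟨0, ⟨by simp, fun w => by simp⟩⟩
  | insert v S hv ih =>
    obtain ⟨x, hx⟩ := ih
    obtain ⟨z, hmargin, hspan⟩ := hx.exists_extension hdeg hy hv
    exact ⟨update x v z, hx.update_insert hsym hv hmargin hspan⟩

end SimpleGraph

/-- Every `d`-regular graph admits a proper edge coloring of its edges with
at most `2d` colors (its edge set partitions into at most `2d` matchings), and
consequently, for any `±1` edge labeling, there is a `2d`-dimensional embedding
fitting all edge labels with margin `> 1`. -/
theorem dRegular_edgeColoring_and_2d_embedding {V : Type*} [Fintype V] (d : ℕ) (hd : 0 < d)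
    (G : SimpleGraph V) [DecidableRel G.Adj] (hreg : G.IsRegularOfDegree d)
    (y : V → V → ℝ)
    (hsym : ∀ a b, y a b = y b a)
    (hpm : ∀ a b, G.Adj a b → y a b = 1 ∨ y a b = -1) :
    (∃ C : V → V → Fin (2 * d),
        (∀ a b, C a b = C b a) ∧
        (∀ a b c, G.Adj a b → G.Adj a c → b ≠ c → C a b ≠ C a c)) ∧
    (∃ x : V → EuclideanSpace ℝ (Fin (2 * d)),
        ∀ a b, G.Adj a b → y a b * ⟪x a, x b⟫ > 1) := by
  refine ⟨G.exists_edgeColoring_of_degree_le hd fun v => (hreg v).le, ?_⟩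
  have hdim : ∀ v, G.degree v ≤ finrank ℝ (EuclideanSpace ℝ (Fin (2 * d))) := fun v => by
    rw [finrank_euclideanSpace_fin, hreg v]
    omega
  have hy : ∀ a b, G.Adj a b → y a b ≠ 0 := fun a b hab => by
    rcases hpm a b hab with h | h <;> norm_num [h]
  exact G.exists_margin_embedding hdim hsym hy
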